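/- Let $\mathcal{V}^{(1)}$ and $\mathcal{V}^{(2)}$ be regular vine tree sequences on disjoint index sets of sizes $d_1$ and $d_2$ respectively, and for each level $j \geq 1$ let $E_j^{(b)}$ be a set of bridging edges satisfying the tree property (adding $E_j^{(b)}$ to $E_j^{(1)} \cup E_j^{(2)}$ on node set $N_j^{(1)} \cup N_j^{(2)} \cup E_{j-1}^{(b)}$ yields a spanning tree) and the proximity condition (for $j \geq 2$, each bridging edge connects two nodes $n_1, n_2$ with $|n_1 \cap n_2| = 1$). Then the merged sequence $\mathcal{V}$ with node sets $N_j = N_j^{(1)} \cup N_j^{(2)} \cup E_{j-1}^{(b)}$ and edge sets $E_j = E_j^{(1)} \cup E_j^{(2)} \cup E_j^{(b)}$ is a regular vine tree sequence on $d_1 + d_2$ elements. -/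
import Mathlib


/-- A (spanning) tree on a finite node set `N` with edge set `E`:
edges are non-diagonal, have endpoints in `N`, the graph is acyclic, and
any two nodes of `N` are connected. -/
def IsTreeOn {V : Type*} (N : Finset V) (E : Finset (Sym2 V)) : Prop :=
  (∀ e ∈ E, ¬ e.IsDiag) ∧
  (∀ e ∈ E, ∀ v ∈ e, v ∈ N) ∧
  (SimpleGraph.fromEdgeSet (E : Set (Sym2 V))).IsAcyclic ∧
  ∀ a ∈ N, ∀ b ∈ N, (SimpleGraph.fromEdgeSet (E : Set (Sym2 V))).Reachable a b

/-- A regular vine (R-vine) tree sequence on `d` elements, where nodes of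
tree `j ≥ 2` are identified with the edges of tree `j - 1` via the injection `ι`:
`T_1` is a spanning tree on `d` nodes, each `T_j` is a spanning tree, the node
set of level `j ≥ 2` consists of the edges of level `j - 1`, and the proximity
condition holds: two nodes joined by an edge at level `j` correspond to edges
at level `j - 1` sharing a common node. -/
def IsRVineOn {V : Type*} [DecidableEq V] (d : ℕ) (N : ℕ → Finset V)
    (E : ℕ → Finset (Sym2 V)) (ι : Sym2 V → V) : Prop :=
  (N 1).card = d ∧
  (∀ j, 1 ≤ j → j ≤ d - 1 → IsTreeOn (N j) (E j)) ∧
  (∀ j, 2 ≤ j → j ≤ d - 1 → N j = (E (j - 1)).image ι) ∧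
  (∀ j, 2 ≤ j → j ≤ d - 1 → ∀ p ∈ E j,
    ∃ e₁ ∈ E (j - 1), ∃ e₂ ∈ E (j - 1),
      p = s(ι e₁, ι e₂) ∧ ∃ v, v ∈ e₁ ∧ v ∈ e₂)

/-- Theorem 1 of the paper (validity of the NVC merging procedure): merging two
R-vine tree sequences on disjoint index sets of sizes `d₁` and `d₂` by bridging
edge sets `E_b j` satisfying the tree property and the proximity condition
yields an R-vine tree sequence on `d₁ + d₂` elements, with node sets
`N j = N₁ j ∪ N₂ j ∪ (E_b (j-1)).image ι` and edge sets
`E j = E₁ j ∪ E₂ j ∪ E_b j`. -/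
theorem nvc_merge_isRVine {V : Type*} [DecidableEq V] {d₁ d₂ : ℕ}
    (hd₁ : 2 ≤ d₁) (hd₂ : 2 ≤ d₂)
    (N₁ N₂ : ℕ → Finset V) (E₁ E₂ Eb : ℕ → Finset (Sym2 V))
    (ι : Sym2 V → V) (hι : Function.Injective ι)
    (hv₁ : IsRVineOn d₁ N₁ E₁ ι) (hv₂ : IsRVineOn d₂ N₂ E₂ ι)
    -- the two vines live on disjoint index sets
    (hdisj : Disjoint (N₁ 1) (N₂ 1))
    -- beyond its own levels, each vine has no edges, and the node-set
    -- convention `N j = (E (j-1)).image ι` is extended to all levels `j ≥ 2`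
    (hE₁top : ∀ j, d₁ ≤ j → E₁ j = ∅) (hE₂top : ∀ j, d₂ ≤ j → E₂ j = ∅)
    (hN₁ext : ∀ j, 2 ≤ j → N₁ j = (E₁ (j - 1)).image ι)
    (hN₂ext : ∀ j, 2 ≤ j → N₂ j = (E₂ (j - 1)).image ι)
    (hEb0 : Eb 0 = ∅)
    -- tree property: adding the bridging edges yields a spanning tree at each level
    (htree : ∀ j, 1 ≤ j → j ≤ d₁ + d₂ - 1 →
      IsTreeOn (N₁ j ∪ N₂ j ∪ (Eb (j - 1)).image ι) (E₁ j ∪ E₂ j ∪ Eb j))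
    -- proximity condition: each bridging edge at level `j ≥ 2` connects two
    -- nodes `n₁ = ι e₁`, `n₂ = ι e₂` corresponding to level-`(j-1)` edges
    -- with `|n₁ ∩ n₂| = 1`, i.e. sharing exactly one common node
    (hprox : ∀ j, 2 ≤ j → j ≤ d₁ + d₂ - 1 → ∀ p ∈ Eb j,
      ∃ e₁ ∈ E₁ (j - 1) ∪ E₂ (j - 1) ∪ Eb (j - 1),
        ∃ e₂ ∈ E₁ (j - 1) ∪ E₂ (j - 1) ∪ Eb (j - 1),
          p = s(ι e₁, ι e₂) ∧ ∃! v, v ∈ e₁ ∧ v ∈ e₂) :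
    IsRVineOn (d₁ + d₂) (fun j => N₁ j ∪ N₂ j ∪ (Eb (j - 1)).image ι)
      (fun j => E₁ j ∪ E₂ j ∪ Eb j) ι := by
  obtain ⟨hc₁, ht₁, hn₁, hp₁⟩ := hv₁
  obtain ⟨hc₂, ht₂, hn₂, hp₂⟩ := hv₂
  refine ⟨?_, ?_, ?_, ?_⟩
  · simp only [hEb0, Finset.image_empty, Finset.union_empty]
    rw [Finset.card_union_of_disjoint hdisj, hc₁, hc₂]
  · exact htree
  · intro j h2 hle
    show N₁ j ∪ N₂ j ∪ (Eb (j - 1)).image ι = (E₁ (j - 1) ∪ E₂ (j - 1) ∪ Eb (j - 1)).image ι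
    rw [hN₁ext j h2, hN₂ext j h2, Finset.image_union, Finset.image_union]
  · intro j h2 hle p hp
    simp only [Finset.mem_union] at hp
    rcases hp with (hp | hp) | hp
    · by_cases hj : j ≤ d₁ - 1
      · obtain ⟨e₁, he₁, e₂, he₂, heq, v, hv⟩ := hp₁ j h2 hj p hp
        exact ⟨e₁, by simp [he₁], e₂, by simp [he₂], heq, v, hv⟩
      · exfalso
        rw [hE₁top j (by omega)] at hp
        exact absurd hp (Finset.notMem_empty p)
    · by_cases hj : j ≤ d₂ - 1
      · obtain ⟨e₁, he₁, e₂, he₂, heq, v, hv⟩ := hp₂ j h2 hj p hp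
        exact ⟨e₁, by simp [he₁], e₂, by simp [he₂], heq, v, hv⟩
      · exfalso
        rw [hE₂top j (by omega)] at hp
        exact absurd hp (Finset.notMem_empty p)
    · obtain ⟨e₁, he₁, e₂, he₂, heq, v, hv, -⟩ := hprox j h2 hle p hp
      exact ⟨e₁, he₁, e₂, he₂, heq, v, hv⟩
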